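/- Let H be a d×d complex Hermitian matrix with spectral decomposition H = Σ_{i=1}^M λ_i Π_i (eigenvalues ordered increasingly, nonzero pairwise-orthogonal Hermitian projections summing to the identity), and let β ≥ 0. Write ρ_β := e^{−βH}/Tr[e^{−βH}] and π := Π_1/d_G with d_G := Tr[Π_1]. Then (1/2)‖ρ_β − π‖_1 = 1 − F(ρ_β, π), and βλ_1 − ln d_G + ln Tr[e^{−βH}] = −ln F(ρ_β, π), where the left-hand side of the second equality is the value of the quantum relative entropy D(π‖ρ_β). -/

import Mathlib

open Matrix
open scoped ComplexOrder

/-- Positive semidefinite square root (junk value `0` off the PSD matrices). -/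
noncomputable def msqrt {d : ℕ} (A : Matrix (Fin d) (Fin d) ℂ) : Matrix (Fin d) (Fin d) ℂ :=
  open scoped Classical MatrixOrder Matrix.Norms.L2Operator in
  if h : A.PosSemidef then CFC.sqrt A else 0

/-- Trace norm `‖A‖₁ = Tr[√(Aᴴ A)]`. -/
noncomputable def traceNorm {d : ℕ} (A : Matrix (Fin d) (Fin d) ℂ) : ℝ :=
  (msqrt (Aᴴ * A)).trace.re

/-- Fidelity `F(ρ,σ) = (Tr[√(√σ ρ √σ)])²`. -/
noncomputable def fidelity {d : ℕ} (ρ σ : Matrix (Fin d) (Fin d) ℂ) : ℝ :=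
  ((msqrt (msqrt σ * ρ * msqrt σ)).trace.re) ^ 2

section aux
variable {d M : ℕ} {P : Fin M → Matrix (Fin d) (Fin d) ℂ}

lemma spec_mul (hPorth : ∀ i j, P i * P j = if i = j then P i else 0)
    (a b : Fin M → ℂ) :
    (∑ i, a i • P i) * (∑ i, b i • P i) = ∑ i, (a i * b i) • P i := by
  rw [Finset.sum_mul_sum]
  simp_rw [smul_mul_assoc, mul_smul_comm, smul_smul, hPorth, smul_ite, smul_zero,
    Finset.sum_ite_eq, Finset.mem_univ, if_true]

lemma spec_pow (hPorth : ∀ i j, P i * P j = if i = j then P i else 0)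
    (hPsum : ∑ i, P i = 1) (a : Fin M → ℂ) (n : ℕ) :
    (∑ i, a i • P i) ^ n = ∑ i, (a i ^ n) • P i := by
  induction n with
  | zero => simp [hPsum]
  | succ n ih => rw [pow_succ, ih, spec_mul hPorth]; simp [pow_succ]

lemma spec_exp (hPorth : ∀ i j, P i * P j = if i = j then P i else 0)
    (hPsum : ∑ i, P i = 1) (a : Fin M → ℂ) :
    NormedSpace.exp (∑ i, a i • P i) = ∑ i, Complex.exp (a i) • P i := by
  rw [NormedSpace.exp_eq_tsum ℂ]
  simp_rw [spec_pow hPorth hPsum, Finset.smul_sum, smul_smul]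
  rw [Summable.tsum_finsetSum (fun i _ => ?_)]
  · refine Finset.sum_congr rfl fun i _ => ?_
    rw [Summable.tsum_smul_const]
    · congr 1
      rw [Complex.exp_eq_exp_ℂ, NormedSpace.exp_eq_tsum ℂ]
      simp [smul_eq_mul]
    · simpa [smul_eq_mul] using NormedSpace.expSeries_summable' (𝕂 := ℂ) (a i)
  · simpa [smul_eq_mul] using
      (NormedSpace.expSeries_summable' (𝕂 := ℂ) (a i)).smul_const (P i)

lemma spec_psd (hPherm : ∀ i, (P i).IsHermitian)
    (hPorth : ∀ i j, P i * P j = if i = j then P i else 0)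
    (c : Fin M → ℝ) (hc : ∀ i, 0 ≤ c i) :
    PosSemidef (∑ i, ((c i : ℂ)) • P i) := by
  have h : ∀ i ∈ Finset.univ, PosSemidef ((c i : ℂ) • P i) := by
    intro i _
    have key : (c i : ℂ) • P i
        = ((Real.sqrt (c i) : ℂ) • P i)ᴴ * ((Real.sqrt (c i) : ℂ) • P i) := by
      rw [conjTranspose_smul, (hPherm i).eq, smul_mul_assoc, mul_smul_comm, smul_smul,
        hPorth i i, if_pos rfl]
      congr 1
      rw [Complex.star_def, Complex.conj_ofReal, ← Complex.ofReal_mul,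
        Real.mul_self_sqrt (hc i)]
    rw [key]
    exact posSemidef_conjTranspose_mul_self _
  exact Finset.sum_induction _ _ (fun A B hA hB => hA.add hB) PosSemidef.zero h

lemma spec_msqrt (hPherm : ∀ i, (P i).IsHermitian)
    (hPorth : ∀ i j, P i * P j = if i = j then P i else 0)
    (c : Fin M → ℝ) (hc : ∀ i, 0 ≤ c i) :
    msqrt (∑ i, ((c i : ℂ)) • P i) = ∑ i, ((Real.sqrt (c i) : ℂ)) • P i := by
  have hA := spec_psd hPherm hPorth c hc
  rw [msqrt, dif_pos hA]
  have hB := spec_psd hPherm hPorth (fun i => Real.sqrt (c i)) (fun i => Real.sqrt_nonneg _)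
  open scoped MatrixOrder Matrix.Norms.L2Operator in
  refine CFC.sqrt_unique ?_ hB.nonneg
  rw [spec_mul hPorth]
  refine Finset.sum_congr rfl fun i _ => ?_
  rw [← Complex.ofReal_mul, Real.mul_self_sqrt (hc i)]

lemma spec_trace (a : Fin M → ℂ) :
    (∑ i, a i • P i).trace = ∑ i, a i * (P i).trace := by
  rw [trace_sum]
  exact Finset.sum_congr rfl fun i _ => by rw [trace_smul, smul_eq_mul]

lemma trace_real (hPherm : ∀ i, (P i).IsHermitian)
    (hPorth : ∀ i j, P i * P j = if i = j then P i else 0) (i : Fin M) :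
    ∃ r : ℝ, 0 ≤ r ∧ (P i).trace = (r : ℂ) := by
  have hPP : P i * P i = P i := by rw [hPorth i i, if_pos rfl]
  have hP : P i = (P i)ᴴ * P i := by rw [(hPherm i).eq, hPP]
  refine ⟨∑ j, ∑ k, Complex.normSq (P i k j),
    Finset.sum_nonneg fun j _ => Finset.sum_nonneg fun k _ => Complex.normSq_nonneg _, ?_⟩
  calc (P i).trace = ((P i)ᴴ * P i).trace := by rw [← hP]
    _ = ∑ j, ∑ k, (starRingEnd ℂ) (P i k j) * P i k j := by
        simp [Matrix.trace, Matrix.diag, Matrix.mul_apply, Matrix.conjTranspose_apply]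
    _ = ∑ j, ∑ k, ((Complex.normSq (P i k j) : ℝ) : ℂ) := by
        simp [Complex.normSq_eq_conj_mul_self]
    _ = ((∑ j, ∑ k, Complex.normSq (P i k j) : ℝ) : ℂ) := by push_cast; rfl

end aux

/-- relations between the trace distance, fidelity, and relative entropy of
the thermal state `ρ_β = e^{-βH}/Tr[e^{-βH}]` and the normalized ground-space projector
`π = Π₁/d_G`. -/
theorem trace_dist_fidelity_relent_relations
    {d M : ℕ} (hd : 1 ≤ d) (hM : 2 ≤ M)
    (lam : Fin M → ℝ) (hlam : Monotone lam)
    (P : Fin M → Matrix (Fin d) (Fin d) ℂ)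
    (hPne : ∀ i, P i ≠ 0)
    (hPherm : ∀ i, (P i).IsHermitian)
    (hPorth : ∀ i j, P i * P j = if i = j then P i else 0)
    (hPsum : ∑ i, P i = 1)
    (H : Matrix (Fin d) (Fin d) ℂ)
    (hH : H = ∑ i, (lam i : ℂ) • P i)
    (i0 : Fin M) (hi0 : i0 = ⟨0, by omega⟩)
    (i1 : Fin M) (hi1 : i1 = ⟨1, by omega⟩)
    (dG : ℕ) (hdGpos : 0 < dG) (hdG : (P i0).trace = (dG : ℂ))
    (β : ℝ) (hβ : 0 ≤ β) :
    (traceNorm (((NormedSpace.exp ((-(β : ℂ)) • H)).trace)⁻¹ •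
          NormedSpace.exp ((-(β : ℂ)) • H) -
        ((dG : ℂ))⁻¹ • P i0) / 2 =
      1 - fidelity (((NormedSpace.exp ((-(β : ℂ)) • H)).trace)⁻¹ •
          NormedSpace.exp ((-(β : ℂ)) • H))
        (((dG : ℂ))⁻¹ • P i0)) ∧
    (β * lam i0 - Real.log (dG : ℝ) + Real.log ((NormedSpace.exp ((-(β : ℂ)) • H)).trace.re) =
      -Real.log (fidelity (((NormedSpace.exp ((-(β : ℂ)) • H)).trace)⁻¹ •
          NormedSpace.exp ((-(β : ℂ)) • H))
        (((dG : ℂ))⁻¹ • P i0))) := by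
  -- the Gibbs weights
  set μ : Fin M → ℝ := fun i => Real.exp (-(β * lam i)) with hμdef
  have hμpos : ∀ i, 0 < μ i := fun i => Real.exp_pos _
  -- the exponential
  have hexp : NormedSpace.exp ((-(β : ℂ)) • H) = ∑ i, ((μ i : ℂ)) • P i := by
    have h1 : (-(β : ℂ)) • H = ∑ i, ((-(β * lam i) : ℝ) : ℂ) • P i := by
      rw [hH, Finset.smul_sum]
      refine Finset.sum_congr rfl fun i _ => ?_
      rw [smul_smul]
      push_cast
      ring_nf
    rw [h1, spec_exp hPorth hPsum]
    refine Finset.sum_congr rfl fun i _ => ?_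
    rw [← Complex.ofReal_exp]
  -- real nonneg traces
  choose t ht0 htr using trace_real hPherm hPorth
  have hti0 : t i0 = (dG : ℝ) := by
    have h := (htr i0).symm.trans hdG
    exact_mod_cast h
  -- partition function
  set Z : ℝ := ∑ i, μ i * t i with hZdef
  have htrE : (∑ i, ((μ i : ℂ)) • P i).trace = (Z : ℂ) := by
    rw [spec_trace, hZdef]
    push_cast
    refine Finset.sum_congr rfl fun i _ => ?_
    rw [htr i]
  have hZ_ge : μ i0 * (dG : ℝ) ≤ Z := by
    rw [← hti0]
    exact Finset.single_le_sum (fun i _ => mul_nonneg (hμpos i).le (ht0 i)) (Finset.mem_univ i0)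
  have hdGR : (0:ℝ) < (dG : ℝ) := by exact_mod_cast hdGpos
  have hZpos : (0:ℝ) < Z := lt_of_lt_of_le (by positivity) hZ_ge
  -- the state ρ as a spectral sum
  set r : Fin M → ℝ := fun i => μ i / Z with hrdef
  have hρ : ((NormedSpace.exp ((-(β : ℂ)) • H)).trace)⁻¹ •
      NormedSpace.exp ((-(β : ℂ)) • H) = ∑ i, ((r i : ℂ)) • P i := by
    rw [hexp, htrE, Finset.smul_sum]
    refine Finset.sum_congr rfl fun i _ => ?_
    rw [smul_smul, hrdef]
    push_cast
    rw [div_eq_inv_mul]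
  -- π as a spectral sum
  set s : Fin M → ℝ := fun i => if i = i0 then ((dG : ℝ))⁻¹ else 0 with hsdef
  have hs0 : ∀ i, 0 ≤ s i := by
    intro i; rw [hsdef]; dsimp only; split
    · positivity
    · exact le_refl 0
  have hπ : ((dG : ℂ))⁻¹ • P i0 = ∑ i, ((s i : ℂ)) • P i := by
    rw [hsdef]
    push_cast
    simp [apply_ite, ite_smul, zero_smul, Finset.sum_ite_eq, Finset.mem_univ]
  have hr0 : ∀ i, 0 ≤ r i := fun i => div_nonneg (hμpos i).le hZpos.le
  -- real trace of a real spectral sum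
  have htrace_re : ∀ c : Fin M → ℝ, ((∑ i, ((c i : ℂ)) • P i).trace).re = ∑ i, c i * t i := by
    intro c
    rw [spec_trace]
    have h : ∑ i, (c i : ℂ) * (P i).trace = ((∑ i, c i * t i : ℝ) : ℂ) := by
      push_cast
      exact Finset.sum_congr rfl fun i _ => by rw [htr i]
    rw [h, Complex.ofReal_re]
  -- the fidelity value
  set F : ℝ := μ i0 * (dG : ℝ) / Z with hFdef
  have hμZ : μ i0 / Z ≤ ((dG : ℝ))⁻¹ := by
    rw [div_le_iff₀ hZpos, inv_mul_eq_div, le_div_iff₀ hdGR]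
    linarith [hZ_ge]
  have hfid : fidelity (((NormedSpace.exp ((-(β : ℂ)) • H)).trace)⁻¹ •
      NormedSpace.exp ((-(β : ℂ)) • H)) (((dG : ℂ))⁻¹ • P i0) = F := by
    rw [fidelity, hπ, hρ, spec_msqrt hPherm hPorth s hs0, spec_mul hPorth, spec_mul hPorth]
    have hco : ∀ i, ((Real.sqrt (s i) : ℂ)) * (r i : ℂ) * ((Real.sqrt (s i)) : ℂ) =
        (((s i * r i : ℝ)) : ℂ) := by
      intro i
      rw [← Complex.ofReal_mul, ← Complex.ofReal_mul]
      congr 1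
      rw [mul_right_comm, Real.mul_self_sqrt (hs0 i)]
    simp_rw [hco]
    rw [spec_msqrt hPherm hPorth (fun i => s i * r i) (fun i => mul_nonneg (hs0 i) (hr0 i)),
      htrace_re]
    rw [Finset.sum_eq_single i0 (fun i _ hne => by
      have : s i = 0 := by rw [hsdef]; exact if_neg hne
      simp [this]) (fun h => absurd (Finset.mem_univ i0) h)]
    have hsi0 : s i0 = ((dG : ℝ))⁻¹ := by rw [hsdef]; exact if_pos rfl
    rw [hsi0, hti0, mul_pow, Real.sq_sqrt (mul_nonneg (by positivity) (hr0 i0)), hFdef, hrdef]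
    field_simp
  -- the trace-norm value
  set a : Fin M → ℝ := fun i => r i - s i with hadef
  have hA : ((NormedSpace.exp ((-(β : ℂ)) • H)).trace)⁻¹ •
      NormedSpace.exp ((-(β : ℂ)) • H) - ((dG : ℂ))⁻¹ • P i0 = ∑ i, ((a i : ℂ)) • P i := by
    rw [hρ, hπ, ← Finset.sum_sub_distrib]
    refine Finset.sum_congr rfl fun i _ => ?_
    rw [← sub_smul, hadef]
    push_cast
    rfl
  have hTN : traceNorm (((NormedSpace.exp ((-(β : ℂ)) • H)).trace)⁻¹ •
      NormedSpace.exp ((-(β : ℂ)) • H) - ((dG : ℂ))⁻¹ • P i0) = 2 - 2 * F := by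
    rw [traceNorm, hA]
    have hAH : (∑ i, ((a i : ℂ)) • P i)ᴴ = ∑ i, ((a i : ℂ)) • P i := by
      rw [conjTranspose_sum]
      refine Finset.sum_congr rfl fun i _ => ?_
      rw [conjTranspose_smul, (hPherm i).eq, Complex.star_def, Complex.conj_ofReal]
    rw [hAH, spec_mul hPorth]
    simp_rw [← Complex.ofReal_mul]
    rw [spec_msqrt hPherm hPorth (fun i => a i * a i) (fun i => mul_self_nonneg _),
      htrace_re]
    have habs : ∀ i, Real.sqrt (a i * a i) = |a i| := fun i => Real.sqrt_mul_self_eq_abs _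
    simp_rw [habs]
    have hsplit : ∀ i, |a i| * t i = r i * t i +
        (if i = i0 then (|a i0| - r i0) * t i0 else 0) := by
      intro i
      by_cases h : i = i0
      · subst h; rw [if_pos rfl]; ring
      · rw [if_neg h]
        have hai : a i = r i := by rw [hadef]; dsimp only; rw [hsdef]; dsimp only
                                   rw [if_neg h, sub_zero]
        rw [hai, abs_of_nonneg (hr0 i), add_zero]
    simp_rw [hsplit]
    rw [Finset.sum_add_distrib, Finset.sum_ite_eq', if_pos (Finset.mem_univ i0)]
    have hsum1 : ∑ i, r i * t i = 1 := by
      rw [hrdef]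
      dsimp only
      simp_rw [div_mul_eq_mul_div, ← Finset.sum_div]
      rw [← hZdef, div_self hZpos.ne']
    have hai0 : a i0 = μ i0 / Z - ((dG : ℝ))⁻¹ := by
      rw [hadef]; dsimp only; rw [hsdef]; dsimp only; rw [if_pos rfl, hrdef]
    have habs0 : |a i0| = ((dG : ℝ))⁻¹ - μ i0 / Z := by
      rw [hai0, abs_of_nonpos (by linarith [hμZ]), neg_sub]
    rw [hsum1, habs0, hti0, hrdef, hFdef]
    dsimp only
    field_simp
    ring
  constructor
  · rw [hTN, hfid]; ring
  · rw [hfid, hexp, htrE, Complex.ofReal_re, hFdef]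
    have hFlog : Real.log (μ i0 * (dG : ℝ) / Z) =
        -(β * lam i0) + Real.log (dG : ℝ) - Real.log Z := by
      rw [Real.log_div (by positivity) hZpos.ne', Real.log_mul (hμpos i0).ne' hdGR.ne',
        hμdef]
      dsimp only
      rw [Real.log_exp]
    rw [hFlog]
    ring
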